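/- For 1<p<∞, -n/p ≤ r < 0, and -n < α·p < -n - r·p, the Morrey space L_p^r(ℝ^n) embeds continuously into the weighted Lebesgue space L_p(ℝ^n, w_α) with weight w_α(x) = (1+|x|²)^{α/2}; i.e., there is a constant C such that ‖f·w_α‖_{L_p} ≤ C ‖f‖_{L_p^r} for all f ∈ L_p^r(ℝ^n). -/

import Mathlib

open MeasureTheory ENNReal Metric

noncomputable def morreyNorm (n : ℕ) (p r : ℝ)
    (g : EuclideanSpace ℝ (Fin n) → ℝ≥0∞) : ℝ≥0∞ :=
  ⨆ (x : EuclideanSpace ℝ (Fin n)) (R : ℝ) (_ : 0 < R),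
    ENNReal.ofReal (R ^ (-((n : ℝ) / p + r))) *
      (∫⁻ y in Metric.ball x R, g y ^ p) ^ (1 / p)

/-! Split the space into the unit ball and the dyadic annuli `2^k ≤ |x| < 2^(k+1)`. On the `k`-th
annulus the weight `w_α^p` is at most `2^(kαp)`, while the Morrey norm bounds the integral of `|f|^p`
over the ball of radius `2^(k+1)` by `2^((k+1)(n+rp)) ‖f‖^p`; since `αp + n + rp < 0`, the resulting
series is geometric. -/

section DyadicAnnuli

variable {X : Type*} [PseudoMetricSpace X]

lemma univ_subset_ball_union_iUnion_annuli (x₀ : X) :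
    (Set.univ : Set X) ⊆ ball x₀ 1 ∪ ⋃ k : ℕ, ball x₀ (2 ^ (k + 1)) \ ball x₀ (2 ^ k) := by
  intro x _
  by_cases hx : dist x x₀ < 1
  · exact Or.inl hx
  · obtain ⟨k, hk, hk'⟩ := exists_nat_pow_near (not_lt.1 hx) one_lt_two
    exact Or.inr (Set.mem_iUnion.2 ⟨k, hk', not_lt.2 hk⟩)

variable [MeasurableSpace X]

/-- Only subadditivity of restricted measures is used, so `F` need not be measurable. -/
lemma lintegral_le_ball_add_tsum_annuli (μ : Measure X) (x₀ : X) (F : X → ℝ≥0∞) :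
    ∫⁻ x, F x ∂μ ≤ ∫⁻ x in ball x₀ 1, F x ∂μ +
      ∑' k : ℕ, ∫⁻ x in ball x₀ (2 ^ (k + 1)) \ ball x₀ (2 ^ k), F x ∂μ :=
  calc ∫⁻ x, F x ∂μ = ∫⁻ x in Set.univ, F x ∂μ := by rw [Measure.restrict_univ]
    _ ≤ ∫⁻ x in ball x₀ 1 ∪ ⋃ k : ℕ, ball x₀ (2 ^ (k + 1)) \ ball x₀ (2 ^ k), F x ∂μ :=
      lintegral_mono_set (univ_subset_ball_union_iUnion_annuli x₀)
    _ ≤ _ := (lintegral_union_le _ _ _).trans (add_le_add_right (lintegral_iUnion_le _ _) _)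

variable [OpensMeasurableSpace X]

theorem lintegral_mul_le_of_ball_growth (μ : Measure X) (x₀ : X) {g w : X → ℝ≥0∞}
    {A : ℝ≥0∞} {β e : ℝ} (hβe : β + e < 0)
    (hg : ∀ R : ℝ, 0 < R → ∫⁻ x in ball x₀ R, g x ∂μ ≤ ENNReal.ofReal (R ^ e) * A)
    (hw_ball : ∀ x ∈ ball x₀ 1, w x ≤ 1)
    (hw_far : ∀ (k : ℕ) x, 2 ^ k ≤ dist x x₀ → w x ≤ ENNReal.ofReal ((2 ^ k) ^ β)) :
    ∫⁻ x, w x * g x ∂μ ≤ ENNReal.ofReal (1 + 2 ^ e * (1 - 2 ^ (β + e))⁻¹) * A := by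
  set q : ℝ := 2 ^ (β + e)
  have hq : q < 1 := Real.rpow_lt_one_of_one_lt_of_neg one_lt_two hβe
  have h_ball : ∫⁻ x in ball x₀ 1, w x * g x ∂μ ≤ A :=
    calc ∫⁻ x in ball x₀ 1, w x * g x ∂μ ≤ ∫⁻ x in ball x₀ 1, g x ∂μ :=
          setLIntegral_mono' measurableSet_ball fun x hx =>
            mul_le_of_le_one_left zero_le (hw_ball x hx)
      _ ≤ A := by simpa using hg 1 one_pos
  have h_annulus (k : ℕ) : ∫⁻ x in ball x₀ (2 ^ (k + 1)) \ ball x₀ (2 ^ k), w x * g x ∂μ ≤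
      ENNReal.ofReal (2 ^ e * q ^ k) * A :=
    calc ∫⁻ x in ball x₀ (2 ^ (k + 1)) \ ball x₀ (2 ^ k), w x * g x ∂μ
        ≤ ∫⁻ x in ball x₀ (2 ^ (k + 1)) \ ball x₀ (2 ^ k),
            ENNReal.ofReal ((2 ^ k) ^ β) * g x ∂μ :=
          setLIntegral_mono' (measurableSet_ball.diff measurableSet_ball) fun x hx =>
            mul_le_mul_left (hw_far k x (not_lt.1 hx.2)) _
      _ = ENNReal.ofReal ((2 ^ k) ^ β) *
            ∫⁻ x in ball x₀ (2 ^ (k + 1)) \ ball x₀ (2 ^ k), g x ∂μ :=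
          lintegral_const_mul' _ _ ofReal_ne_top
      _ ≤ ENNReal.ofReal ((2 ^ k) ^ β) * (ENNReal.ofReal ((2 ^ (k + 1)) ^ e) * A) :=
          mul_le_mul_right ((lintegral_mono_set Set.sdiff_subset).trans
            (hg _ (by positivity))) _
      _ = ENNReal.ofReal (2 ^ e * q ^ k) * A := by
          rw [← mul_assoc, ← ENNReal.ofReal_mul (by positivity)]
          congr 2
          rw [← Real.rpow_natCast, ← Real.rpow_natCast, ← Real.rpow_natCast,
            ← Real.rpow_mul zero_le_two, ← Real.rpow_mul zero_le_two,
            ← Real.rpow_mul zero_le_two, ← Real.rpow_add two_pos, ← Real.rpow_add two_pos]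
          push_cast
          ring_nf
  have h_sum : ∑' k : ℕ, ENNReal.ofReal (2 ^ e * q ^ k) =
      ENNReal.ofReal (2 ^ e * (1 - q)⁻¹) := by
    have hq0 : 0 ≤ q := by positivity
    rw [← ENNReal.ofReal_tsum_of_nonneg (fun k => by positivity)
      ((summable_geometric_of_lt_one hq0 hq).mul_left _), tsum_mul_left,
      tsum_geometric_of_lt_one hq0 hq]
  calc ∫⁻ x, w x * g x ∂μ
      ≤ A + ∑' k : ℕ, ENNReal.ofReal (2 ^ e * q ^ k) * A :=
        (lintegral_le_ball_add_tsum_annuli μ x₀ _).trans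
          (add_le_add h_ball (ENNReal.tsum_le_tsum h_annulus))
    _ = ENNReal.ofReal (1 + 2 ^ e * (1 - q)⁻¹) * A := by
        rw [ENNReal.tsum_mul_right, h_sum,
          ENNReal.ofReal_add zero_le_one (mul_nonneg (by positivity) (inv_nonneg.2 (by linarith))),
          add_mul, ENNReal.ofReal_one, one_mul]

end DyadicAnnuli

lemma lintegral_ball_rpow_le_morreyNorm {n : ℕ} {p : ℝ} (r : ℝ) (hp : 0 < p)
    (g : EuclideanSpace ℝ (Fin n) → ℝ≥0∞) (x : EuclideanSpace ℝ (Fin n)) {R : ℝ} (hR : 0 < R) :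
    ∫⁻ y in ball x R, g y ^ p ≤ ENNReal.ofReal (R ^ (n + r * p)) * morreyNorm n p r g ^ p := by
  set I := ∫⁻ y in ball x R, g y ^ p
  have h_sup : ENNReal.ofReal (R ^ (-((n : ℝ) / p + r))) * I ^ (1 / p) ≤ morreyNorm n p r g :=
    le_iSup_of_le x (le_iSup_of_le R (le_iSup_of_le hR le_rfl))
  have h_root : I ^ (1 / p) ≤ ENNReal.ofReal (R ^ ((n : ℝ) / p + r)) * morreyNorm n p r g :=
    calc I ^ (1 / p) = ENNReal.ofReal (R ^ ((n : ℝ) / p + r)) *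
          (ENNReal.ofReal (R ^ (-((n : ℝ) / p + r))) * I ^ (1 / p)) := by
          rw [← mul_assoc, ← ENNReal.ofReal_mul (by positivity), ← Real.rpow_add hR,
            add_neg_cancel, Real.rpow_zero, ENNReal.ofReal_one, one_mul]
      _ ≤ _ := mul_le_mul_right h_sup _
  calc I = (I ^ (1 / p)) ^ p := by rw [← ENNReal.rpow_mul, one_div_mul_cancel hp.ne', ENNReal.rpow_one]
    _ ≤ (ENNReal.ofReal (R ^ ((n : ℝ) / p + r)) * morreyNorm n p r g) ^ p :=
      ENNReal.rpow_le_rpow h_root hp.le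
    _ = ENNReal.ofReal (R ^ (n + r * p)) * morreyNorm n p r g ^ p := by
      rw [ENNReal.mul_rpow_of_nonneg _ _ hp.le, ENNReal.ofReal_rpow_of_pos (by positivity),
        ← Real.rpow_mul hR.le, add_mul, div_mul_cancel₀ _ hp.ne']

lemma one_add_sq_rpow_le_one (s : ℝ) {β : ℝ} (hβ : β ≤ 0) : (1 + s ^ 2) ^ (β / 2) ≤ 1 :=
  Real.rpow_le_one_of_one_le_of_nonpos (le_add_of_nonneg_right (sq_nonneg s)) (by linarith)

lemma one_add_sq_rpow_le_rpow {s t β : ℝ} (ht : 0 < t) (hts : t ≤ s) (hβ : β ≤ 0) :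
    (1 + s ^ 2) ^ (β / 2) ≤ t ^ β :=
  calc (1 + s ^ 2) ^ (β / 2) ≤ (t ^ 2) ^ (β / 2) :=
        Real.rpow_le_rpow_of_nonpos (by positivity) (by nlinarith) (by linarith)
    _ = t ^ β := by rw [← Real.rpow_natCast, ← Real.rpow_mul ht.le]; ring_nf

lemma eLpNorm_ofReal_le_of_lintegral_rpow_le {Ω E : Type*} [MeasurableSpace Ω]
    [NormedAddCommGroup E] {μ : Measure Ω} {f : Ω → E} {p K : ℝ} {M : ℝ≥0∞}
    (hp : 0 < p) (hK : 0 ≤ K) (h : ∫⁻ x, ‖f x‖ₑ ^ p ∂μ ≤ ENNReal.ofReal K * M ^ p) :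
    eLpNorm f (ENNReal.ofReal p) μ ≤ ENNReal.ofReal (K ^ (1 / p)) * M := by
  rw [eLpNorm_eq_lintegral_rpow_enorm_toReal (by simpa using hp) ofReal_ne_top,
    ENNReal.toReal_ofReal hp.le]
  calc (∫⁻ x, ‖f x‖ₑ ^ p ∂μ) ^ (1 / p) ≤ (ENNReal.ofReal K * M ^ p) ^ (1 / p) :=
        ENNReal.rpow_le_rpow h (by positivity)
    _ = ENNReal.ofReal (K ^ (1 / p)) * M := by
      rw [ENNReal.mul_rpow_of_nonneg _ _ (by positivity), ← ENNReal.rpow_mul,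
        mul_one_div_cancel hp.ne', ENNReal.rpow_one, ENNReal.ofReal_rpow_of_nonneg hK (by positivity)]

theorem morrey_embeds_weighted_Lp_general (n : ℕ) (p r α : ℝ)
    (hp : 1 < p) (hr1 : -(n : ℝ) / p ≤ r)
    (hα2 : α * p < -(n : ℝ) - r * p) :
    ∃ C : ℝ, 0 < C ∧ ∀ f : EuclideanSpace ℝ (Fin n) → ℝ,
      eLpNorm (fun x => (1 + ‖x‖ ^ 2) ^ (α / 2) * f x) (ENNReal.ofReal p) volume
        ≤ ENNReal.ofReal C * morreyNorm n p r (fun x => (‖f x‖₊ : ℝ≥0∞)) := by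
  have hp0 : 0 < p := zero_lt_one.trans hp
  have hαp : α * p ≤ 0 := by nlinarith [(div_le_iff₀ hp0).1 hr1]
  have hq : (2 : ℝ) ^ (α * p + (n + r * p)) < 1 :=
    Real.rpow_lt_one_of_one_lt_of_neg one_lt_two (by linarith)
  set K : ℝ := 1 + 2 ^ ((n : ℝ) + r * p) * (1 - 2 ^ (α * p + (n + r * p)))⁻¹
  have hK : 0 < K := add_pos one_pos (mul_pos (by positivity) (inv_pos.2 (sub_pos.2 hq)))
  refine ⟨K ^ (1 / p), by positivity, fun f => eLpNorm_ofReal_le_of_lintegral_rpow_le hp0 hK.le ?_⟩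
  have h_weight (x : EuclideanSpace ℝ (Fin n)) :
      ‖(1 + ‖x‖ ^ 2) ^ (α / 2) * f x‖ₑ ^ p =
        ENNReal.ofReal ((1 + ‖x‖ ^ 2) ^ (α * p / 2)) * (‖f x‖₊ : ℝ≥0∞) ^ p := by
    rw [enorm_mul, ENNReal.mul_rpow_of_nonneg _ _ hp0.le, Real.enorm_of_nonneg (by positivity),
      ENNReal.ofReal_rpow_of_nonneg (by positivity) hp0.le, ← Real.rpow_mul (by positivity),
      div_mul_eq_mul_div, enorm_eq_nnnorm]
  simp_rw [h_weight]
  refine lintegral_mul_le_of_ball_growth volume 0 (by linarith)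
    (fun R hR => lintegral_ball_rpow_le_morreyNorm r hp0 _ 0 hR)
    (fun x _ => ENNReal.ofReal_le_one.2 (one_add_sq_rpow_le_one _ hαp))
    (fun k x hx => ENNReal.ofReal_le_ofReal (one_add_sq_rpow_le_rpow (by positivity) ?_ hαp))
  rwa [← dist_zero_right]

/-- For `1 < p < ∞`, `-n/p ≤ r < 0` and `-n < α·p < -n - r·p`, the Morrey space
`L_p^r(ℝⁿ)` embeds continuously into the weighted Lebesgue space `L_p(ℝⁿ, w_α)` with
`w_α(x) = (1+|x|²)^{α/2}`. -/
theorem morrey_embeds_weighted_Lp (n : ℕ) (hn : 0 < n) (p r α : ℝ)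
    (hp : 1 < p) (hr1 : -(n : ℝ) / p ≤ r) (hr2 : r < 0)
    (hα1 : -(n : ℝ) < α * p) (hα2 : α * p < -(n : ℝ) - r * p) :
    ∃ C : ℝ, 0 < C ∧ ∀ f : EuclideanSpace ℝ (Fin n) → ℝ,
      eLpNorm (fun x => (1 + ‖x‖ ^ 2) ^ (α / 2) * f x) (ENNReal.ofReal p) volume
        ≤ ENNReal.ofReal C * morreyNorm n p r (fun x => (‖f x‖₊ : ℝ≥0∞)) :=
  morrey_embeds_weighted_Lp_general n p r α hp hr1 hα2
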